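/- arXiv:2101.06811 — 3 statements merged into one kernel-verified Lean document; each statement's English description precedes it below -/
import Mathlib

section
/- Let X and Y be finite nonempty sets with |X| ≥ 2, let ε ≥ 0, and define the randomized-response kernel K from X to X by K(x̃ | x) = 1 − exp(−ε) if x̃ = x and K(x̃ | x) = exp(−ε)/(|X| − 1) if x̃ ≠ x. For any probability distribution P on X × Y, define P̃(x̃, y) = ∑_{x ∈ X} K(x̃ | x)·P(x, y). Then d_TV(P̃, P) ≤ (|X| / (|X| − 1))·exp(−ε). -/
/-- A probability distribution on a finite type: nonnegative and sums to one. -/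
def IsProbDist {Z : Type*} [Fintype Z] (p : Z → ℝ) : Prop :=
  (∀ z, 0 ≤ p z) ∧ ∑ z, p z = 1

/-- Total variation distance between two distributions on a finite type. -/
noncomputable def dTV {Z : Type*} [Fintype Z] (p q : Z → ℝ) : ℝ :=
  (1 / 2) * ∑ z, |p z - q z|

/-- The randomized-response kernel with privacy budget `ε`. -/
noncomputable def rrKernel (X : Type*) [Fintype X] [DecidableEq X] (ε : ℝ) :
    X → X → ℝ := fun x' x =>
  if x' = x then 1 - Real.exp (-ε) else Real.exp (-ε) / (Fintype.card X - 1)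

/-- applying the randomized-response kernel to the `X`-component of a
joint distribution on `X × Y` changes it by at most `(|X|/(|X|-1)) · exp(-ε)` in
total variation distance. -/
theorem tv_randomized_response_le
    {X Y : Type*} [Fintype X] [Fintype Y] [Nonempty X] [Nonempty Y] [DecidableEq X]
    (hX : 2 ≤ Fintype.card X)
    (ε : ℝ) (hε : 0 ≤ ε)
    (P : X × Y → ℝ) (hP : IsProbDist P) :
    dTV (fun p : X × Y => ∑ x : X, rrKernel X ε p.1 x * P (x, p.2)) P ≤
      ((Fintype.card X : ℝ) / ((Fintype.card X : ℝ) - 1)) * Real.exp (-ε) := by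
  obtain ⟨hP0, hP1⟩ := hP
  set δ := Real.exp (-ε) with hδ
  have hδ0 : 0 < δ := Real.exp_pos _
  set c := (Fintype.card X : ℝ) with hc
  have hc2 : (2:ℝ) ≤ c := by rw [hc]; exact_mod_cast hX
  have hc1 : (0:ℝ) < c - 1 := by linarith
  set a := δ / (c - 1) with ha
  have ha0 : 0 ≤ a := div_nonneg hδ0.le hc1.le
  have key : ∀ p : X × Y,
      (∑ x : X, rrKernel X ε p.1 x * P (x, p.2)) - P p
        = a * (∑ x : X, P (x, p.2)) - (δ + a) * P p := by
    intro p
    have h1 : ∀ x : X, rrKernel X ε p.1 x * P (x, p.2)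
        = a * P (x, p.2) + (if p.1 = x then (1 - δ - a) * P (x, p.2) else 0) := by
      intro x
      by_cases h : p.1 = x <;> simp [rrKernel, h, ha, hδ, hc] <;> ring
    rw [Finset.sum_congr rfl (fun x _ => h1 x), Finset.sum_add_distrib,
      Finset.sum_ite_eq Finset.univ p.1 (fun x => (1 - δ - a) * P (x, p.2))]
    simp only [Finset.mem_univ, if_true, ← Finset.mul_sum]
    have : P (p.1, p.2) = P p := by cases p; rfl
    rw [this]; ring
  have bound : ∀ p : X × Y,
      |(∑ x : X, rrKernel X ε p.1 x * P (x, p.2)) - P p|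
        ≤ a * (∑ x : X, P (x, p.2)) + (δ + a) * P p := by
    intro p
    rw [key p]
    have h1 : 0 ≤ ∑ x : X, P (x, p.2) := Finset.sum_nonneg fun x _ => hP0 _
    have h2 : 0 ≤ P p := hP0 p
    calc |a * (∑ x : X, P (x, p.2)) - (δ + a) * P p|
        ≤ |a * (∑ x : X, P (x, p.2))| + |(δ + a) * P p| := abs_sub _ _
      _ = a * (∑ x : X, P (x, p.2)) + (δ + a) * P p := by
          rw [abs_of_nonneg (mul_nonneg ha0 h1),
            abs_of_nonneg (mul_nonneg (by linarith) h2)]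
  have hsum1 : ∑ p : X × Y, (∑ x : X, P (x, p.2)) = c := by
    rw [Fintype.sum_prod_type]
    simp only [Finset.sum_const, Finset.card_univ, nsmul_eq_mul]
    have h1 : ∑ y : Y, ∑ x : X, P (x, y) = 1 := by
      rw [← hP1, Fintype.sum_prod_type]
      exact Finset.sum_comm
    rw [h1, mul_one, hc]
  have hstep : dTV (fun p : X × Y => ∑ x : X, rrKernel X ε p.1 x * P (x, p.2)) P
      ≤ (1/2) * (a * c + (δ + a)) := by
    unfold dTV
    have : ∑ p : X × Y, |(∑ x : X, rrKernel X ε p.1 x * P (x, p.2)) - P p|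
        ≤ ∑ p : X × Y, (a * (∑ x : X, P (x, p.2)) + (δ + a) * P p) :=
      Finset.sum_le_sum fun p _ => bound p
    have h2 : ∑ p : X × Y, (a * (∑ x : X, P (x, p.2)) + (δ + a) * P p)
        = a * c + (δ + a) := by
      rw [Finset.sum_add_distrib, ← Finset.mul_sum, ← Finset.mul_sum, hsum1, hP1,
        mul_one]
    nlinarith [this, h2]
  refine hstep.trans (le_of_eq ?_)
  rw [ha]
  field_simp
  ring
end

section
/- Let X and Y be finite nonempty sets, let π₀, π₁ ≥ 0 with π₀ + π₁ = 1, and for each s ∈ {0,1} let P_s be a probability distribution on X × Y with marginal Q_s(x) = ∑_y P_s(x, y) on X. Let K₀, K₁ be Markov kernels from X to X, and define P̃_s(x̃, y) = ∑_x K_s(x̃ | x)·P_s(x, y) and Q̃_s(x̃) = ∑_x K_s(x̃ | x)·Q_s(x). If Q̃₀ = Q̃₁ (statistical parity of the repaired data), then, writing Q̃ for this common distribution, π₀·d_TV(P̃₀, P₀) + π₁·d_TV(P̃₁, P₁) ≥ π₀·d_TV(Q̃, Q₀) + π₁·d_TV(Q̃, Q₁) ≥ inf_{R} ( π₀·d_TV(R,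 Q₀) + π₁·d_TV(R, Q₁) ), where the infimum is over all probability distributions R on X (the total variation barycenter problem). -/
/-- A Markov kernel from `X` to `X`: `K x' x` is the probability of moving to `x'`
from `x`, so each column `K · x` is a probability distribution. -/
def IsMarkovKernel {X : Type*} [Fintype X] (K : X → X → ℝ) : Prop :=
  ∀ x, IsProbDist (fun x' => K x' x)


lemma dTV_marginal_le {X Y : Type*} [Fintype X] [Fintype Y] (p q : X × Y → ℝ) :
    dTV (fun x => ∑ y : Y, p (x, y)) (fun x => ∑ y : Y, q (x, y)) ≤ dTV p q := by
  unfold dTV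
  have h : ∑ x : X, |(∑ y : Y, p (x, y)) - ∑ y : Y, q (x, y)| ≤ ∑ z : X × Y, |p z - q z| := by
    rw [Fintype.sum_prod_type]
    refine Finset.sum_le_sum fun x _ => ?_
    rw [← Finset.sum_sub_distrib]
    exact Finset.abs_sum_le_sum_abs _ _
  nlinarith [h]

lemma dTV_nonneg {Z : Type*} [Fintype Z] (p q : Z → ℝ) : 0 ≤ dTV p q := by
  unfold dTV
  positivity

/-- under exact statistical parity of the repaired data, the expected
total variation cost of repairing the joint distributions is lower bounded by the
total variation barycenter objective, which in turn is lower bounded by the optimal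
barycenter value. -/
theorem repair_cost_ge_barycenter
    {X Y : Type*} [Fintype X] [Fintype Y] [Nonempty X] [Nonempty Y]
    (π0 π1 : ℝ) (hπ0 : 0 ≤ π0) (hπ1 : 0 ≤ π1) (hπ : π0 + π1 = 1)
    (P0 P1 : X × Y → ℝ) (hP0 : IsProbDist P0) (hP1 : IsProbDist P1)
    (Q0 Q1 : X → ℝ)
    (hQ0 : Q0 = fun x => ∑ y : Y, P0 (x, y))
    (hQ1 : Q1 = fun x => ∑ y : Y, P1 (x, y))
    (K0 K1 : X → X → ℝ) (hK0 : IsMarkovKernel K0) (hK1 : IsMarkovKernel K1)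
    (Pt0 Pt1 : X × Y → ℝ)
    (hPt0 : Pt0 = fun p : X × Y => ∑ x : X, K0 p.1 x * P0 (x, p.2))
    (hPt1 : Pt1 = fun p : X × Y => ∑ x : X, K1 p.1 x * P1 (x, p.2))
    (Qt0 Qt1 : X → ℝ)
    (hQt0 : Qt0 = fun x' => ∑ x : X, K0 x' x * Q0 x)
    (hQt1 : Qt1 = fun x' => ∑ x : X, K1 x' x * Q1 x)
    (hparity : Qt0 = Qt1) :
    π0 * dTV Qt0 Q0 + π1 * dTV Qt0 Q1 ≤ π0 * dTV Pt0 P0 + π1 * dTV Pt1 P1 ∧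
    sInf {v : ℝ | ∃ R : X → ℝ, IsProbDist R ∧ v = π0 * dTV R Q0 + π1 * dTV R Q1} ≤
      π0 * dTV Qt0 Q0 + π1 * dTV Qt0 Q1 := by
  have hQ0d : IsProbDist Q0 := by
    constructor
    · intro x; rw [hQ0]; exact Finset.sum_nonneg fun y _ => hP0.1 _
    · rw [hQ0]; rw [← Fintype.sum_prod_type']; exact hP0.2
  have hQ1d : IsProbDist Q1 := by
    constructor
    · intro x; rw [hQ1]; exact Finset.sum_nonneg fun y _ => hP1.1 _
    · rw [hQ1]; rw [← Fintype.sum_prod_type']; exact hP1.2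
  have hQt0d : IsProbDist Qt0 := by
    constructor
    · intro x; rw [hQt0]
      exact Finset.sum_nonneg fun x' _ => mul_nonneg ((hK0 x').1 x) (hQ0d.1 x')
    · rw [hQt0]
      rw [Finset.sum_comm]
      have : ∀ x ∈ Finset.univ, ∑ x' : X, K0 x' x * Q0 x = Q0 x := by
        intro x _
        rw [← Finset.sum_mul, (hK0 x).2, one_mul]
      rw [Finset.sum_congr rfl this, hQ0d.2]
  -- marginals of Pt
  have hm0 : Qt0 = fun x => ∑ y : Y, Pt0 (x, y) := by
    funext x'
    rw [hQt0, hPt0]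
    simp only [hQ0]
    rw [Finset.sum_comm]
    congr 1; funext x; rw [Finset.mul_sum]
  have hm1 : Qt1 = fun x => ∑ y : Y, Pt1 (x, y) := by
    funext x'
    rw [hQt1, hPt1]
    simp only [hQ1]
    rw [Finset.sum_comm]
    congr 1; funext x; rw [Finset.mul_sum]
  have h0 : dTV Qt0 Q0 ≤ dTV Pt0 P0 := by
    rw [hm0, hQ0]; exact dTV_marginal_le Pt0 P0
  have h1 : dTV Qt0 Q1 ≤ dTV Pt1 P1 := by
    rw [hparity, hm1, hQ1]; exact dTV_marginal_le Pt1 P1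
  constructor
  · exact add_le_add (mul_le_mul_of_nonneg_left h0 hπ0) (mul_le_mul_of_nonneg_left h1 hπ1)
  · apply csInf_le
    · refine ⟨0, fun v hv => ?_⟩
      obtain ⟨R, hR, rfl⟩ := hv
      have := dTV_nonneg R Q0
      have := dTV_nonneg R Q1
      positivity
    · exact ⟨Qt0, hQt0d, rfl⟩
end

section
/- Let X and Y be finite nonempty sets, let π₀, π₁ ≥ 0 with π₀ + π₁ = 1, and for each s ∈ {0,1} let P_s be a probability distribution on X × Y with marginal Q_s(x) = ∑_y P_s(x, y). Identify a pair of Markov kernels (K₀, K₁) from X to X with a point of ℝ^{2|X|²}, define P̃_s(x̃, y) = ∑_x K_s(x̃ | x)·P_s(x, y) and Q̃_s(x̃) = ∑_x K_s(x̃ | x)·Q_s(x), and for ρ ≥ 0 let S_ρ ⊆ ℝ^{2|X|²} denote the set of minimizers of π₀·d_TV(P̃₀, P₀) + π₁·d_TV(P̃₁, P₁) over all pairs of Markov kernels satisfying d_TV(Q̃₁, Q̃₀) ≤ ρ. Then the Hausdorff distance between S_ρ and S_0 tends to 0 as ρ → 0⁺. -/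
/-- Repaired joint distribution `P̃` obtained from `P` by the kernel `K` acting on
the `X`-component. -/
noncomputable def repairJoint {X Y : Type*} [Fintype X] [Fintype Y]
    (K : X → X → ℝ) (P : X × Y → ℝ) : X × Y → ℝ :=
  fun p => ∑ x : X, K p.1 x * P (x, p.2)

/-- Pushforward of a distribution on `X` through the kernel `K`. -/
noncomputable def pushforward {X : Type*} [Fintype X] (K : X → X → ℝ) (q : X → ℝ) :
    X → ℝ := fun x' => ∑ x, K x' x * q x

/-!
The objective and the parity gap are sums of absolute values of affine functions of `(K₀, K₁)`
and the kernel pairs form a polytope `M`, so everything is polyhedral. With `T` bounding `obj`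
on `M`, the truncated epigraph `{(K, r, t) | K ∈ M, gap K ≤ r ≤ 1, obj K ≤ t ≤ T}` is a polytope,
hence the convex hull of its finitely many vertices; the smallest slope from `(0, v(0))` to a
vertex with `r > 0` gives a line `v(0) + B ρ` below the optimal value `v(ρ)` which is attained at
some `ρ₂ > 0`. So `v` is affine on `[0, ρ₂]`, and by convexity `y + (ρ / ρ₂) (y₂ - y)` is optimal
at level `ρ` whenever `y ∈ S₀` and `y₂` is optimal at level `ρ₂`: every point of `S₀` is
`O(ρ)`-close to `S_ρ`. Conversely, by compactness, points of `S_ρ` accumulate as `ρ → 0⁺` only at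
feasible points of value at most `v(0)`, that is, in `S₀`.
-/

open Set Filter Topology Metric

section Polyhedron

variable {V W : Type*} [AddCommGroup V] [Module ℝ V] [AddCommGroup W] [Module ℝ W]

def IsPolyhedral (P : Set W) : Prop :=
  ∃ s : Finset ((W →ₗ[ℝ] ℝ) × ℝ), P = {x | ∀ p ∈ s, p.1 x ≤ p.2}

theorem isPolyhedral_setOf_le (ℓ : W →ₗ[ℝ] ℝ) (c : ℝ) : IsPolyhedral {x | ℓ x ≤ c} :=
  ⟨{(ℓ, c)}, by simp⟩

theorem isPolyhedral_setOf_eq (ℓ : W →ₗ[ℝ] ℝ) (c : ℝ) : IsPolyhedral {x | ℓ x = c} := by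
  classical
  exact ⟨{(ℓ, c), (-ℓ, -c)}, by ext; simp [le_antisymm_iff]⟩

theorem IsPolyhedral.inter {P Q : Set W} (hP : IsPolyhedral P) (hQ : IsPolyhedral Q) :
    IsPolyhedral (P ∩ Q) := by
  classical
  obtain ⟨s, rfl⟩ := hP
  obtain ⟨t, rfl⟩ := hQ
  exact ⟨s ∪ t, by ext; simp [or_imp, forall_and]⟩

theorem IsPolyhedral.iInter {ι : Type*} [Finite ι] {P : ι → Set W}
    (hP : ∀ i, IsPolyhedral (P i)) : IsPolyhedral (⋂ i, P i) := by
  classical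
  cases nonempty_fintype ι
  choose s hs using hP
  refine ⟨Finset.univ.biUnion s, ?_⟩
  ext x
  simp only [hs, mem_iInter, mem_ofPred_eq, Finset.mem_biUnion, Finset.mem_univ, true_and,
    forall_exists_index]
  exact forall_comm

theorem IsPolyhedral.preimage {P : Set W} (hP : IsPolyhedral P) (A : V →ₗ[ℝ] W) :
    IsPolyhedral (A ⁻¹' P) := by
  classical
  obtain ⟨s, rfl⟩ := hP
  refine ⟨s.image fun p => (p.1 ∘ₗ A, p.2), ?_⟩
  ext
  simp only [mem_preimage, mem_ofPred_eq, Finset.forall_mem_image, LinearMap.comp_apply]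

theorem IsPolyhedral.prod {P : Set V} {Q : Set W} (hP : IsPolyhedral P) (hQ : IsPolyhedral Q) :
    IsPolyhedral (P ×ˢ Q) := by
  rw [Set.prod_eq]
  exact (hP.preimage (LinearMap.fst ℝ V W)).inter (hQ.preimage (LinearMap.snd ℝ V W))

theorem IsPolyhedral.convex {P : Set W} (hP : IsPolyhedral P) : Convex ℝ P := by
  obtain ⟨s, rfl⟩ := hP
  simp only [ofPred_forall]
  exact convex_iInter₂ fun p _ => convex_halfSpace_le p.1.isLinear p.2

theorem eq_zero_of_mem_extremePoints_of_eventually_add_smul_mem {A : Set W} {x d : W}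
    (hx : x ∈ A.extremePoints ℝ) (h : ∀ᶠ t in 𝓝 (0 : ℝ), x + t • d ∈ A) : d = 0 := by
  have h' : ∀ᶠ t in 𝓝 (0 : ℝ), x - t • d ∈ A := by
    simpa [sub_eq_add_neg] using (continuous_neg.tendsto' (0 : ℝ) 0 neg_zero).eventually h
  obtain ⟨t, ⟨hsub, hadd⟩, ht⟩ :=
    ((h'.and h).filter_mono nhdsWithin_le_nhds |>.and (self_mem_nhdsWithin (s := {0}ᶜ))).exists
  have : t = 0 ∨ d = 0 := by simpa using hx.2 hsub hadd (mem_openSegment_sub_add x (t • d))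
  exact this.resolve_left ht

theorem convexOn_univ_of_isPolyhedral_epigraph {f : W → ℝ}
    (hf : IsPolyhedral {p : W × ℝ | f p.1 ≤ p.2}) : ConvexOn ℝ univ f :=
  convexOn_iff_convex_epigraph.2 (by simpa using hf.convex)

/-- Two extreme points of a polyhedron with the same active constraints coincide: the line
through them stays in the polyhedron near either of them. -/
theorem IsPolyhedral.finite_extremePoints {P : Set W} (hP : IsPolyhedral P) :
    (P.extremePoints ℝ).Finite := by
  classical
  obtain ⟨s, rfl⟩ := hP
  let active : W → Finset ((W →ₗ[ℝ] ℝ) × ℝ) := fun x => s.filter fun p => p.1 x = p.2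
  refine Set.Finite.of_finite_image (f := active) (s.powerset.finite_toSet.subset ?_) ?_
  · rintro _ ⟨x, -, rfl⟩
    exact Finset.mem_powerset.2 (Finset.filter_subset _ _)
  intro x hx y hy hxy
  have hact : ∀ p ∈ s, p.1 x = p.2 → p.1 y = p.2 := fun p hp h => by
    have : p ∈ active y := hxy ▸ Finset.mem_filter.2 ⟨hp, h⟩
    exact (Finset.mem_filter.1 this).2
  refine (sub_eq_zero.1 (eq_zero_of_mem_extremePoints_of_eventually_add_smul_mem hx ?_)).symm
  simp only [mem_ofPred_eq, eventually_all_finset]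
  intro p hp
  have hval : ∀ t : ℝ, p.1 (x + t • (y - x)) = p.1 x + t * (p.1 y - p.1 x) := by simp
  rcases (hx.1 p hp).eq_or_lt with h | h
  · exact Eventually.of_forall fun t => by simp [hval, h, hact p hp h]
  · have hlim : Tendsto (fun t : ℝ => p.1 x + t * (p.1 y - p.1 x)) (𝓝 0) (𝓝 (p.1 x)) :=
      (by fun_prop : Continuous fun t : ℝ => p.1 x + t * (p.1 y - p.1 x)).tendsto' 0 _ (by simp)
    filter_upwards [hlim.eventually (gt_mem_nhds h)] with t ht
    exact (hval t).symm ▸ ht.le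

theorem exists_min_slope_minorant (E : Finset V) (u w : V →ₗ[ℝ] ℝ) (a : ℝ)
    (hu : ∀ e ∈ E, 0 ≤ u e) (hpos : ∃ e ∈ E, 0 < u e) (ha : ∀ e ∈ E, u e = 0 → a ≤ w e) :
    ∃ B : ℝ, ∃ e ∈ E, 0 < u e ∧ w e = a + B * u e ∧
      ∀ p ∈ convexHull ℝ (E : Set V), a + B * u p ≤ w p := by
  classical
  obtain ⟨e, he, hmin⟩ := (E.filter fun e => 0 < u e).exists_min_image
    (fun e => (w e - a) / u e) (by simpa [Finset.Nonempty] using hpos)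
  obtain ⟨heE, hue⟩ := Finset.mem_filter.1 he
  set B := (w e - a) / u e
  have hE : (E : Set V) ⊆ {p | (B • u - w) p ≤ -a} := by
    intro e' he'
    simp only [mem_ofPred_eq, LinearMap.sub_apply, LinearMap.smul_apply, smul_eq_mul]
    rcases (hu e' he').eq_or_lt with h | h
    · rw [← h, mul_zero]
      linarith [ha e' he' h.symm]
    · have := (le_div_iff₀ h).1 (hmin e' (Finset.mem_filter.2 ⟨he', h⟩))
      linarith
  refine ⟨B, e, heE, hue, by rw [div_mul_cancel₀ _ hue.ne']; ring, fun p hp => ?_⟩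
  have := convexHull_min hE (convex_halfSpace_le (B • u - w).isLinear _) hp
  simp only [mem_ofPred_eq, LinearMap.sub_apply, LinearMap.smul_apply, smul_eq_mul] at this
  linarith

end Polyhedron

section NormedPolyhedron

variable {W : Type*} [NormedAddCommGroup W] [NormedSpace ℝ W]

theorem IsPolyhedral.isClosed [FiniteDimensional ℝ W] {P : Set W} (hP : IsPolyhedral P) :
    IsClosed P := by
  obtain ⟨s, rfl⟩ := hP
  simp only [ofPred_forall]
  exact isClosed_biInter fun p _ => isClosed_le p.1.continuous_of_finiteDimensional continuous_const

theorem IsPolyhedral.exists_finset_eq_convexHull {P : Set W} (hP : IsPolyhedral P)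
    (hPc : IsCompact P) : ∃ E : Finset W, P = convexHull ℝ (E : Set W) := by
  refine ⟨hP.finite_extremePoints.toFinset, ?_⟩
  rw [Set.Finite.coe_toFinset,
    ← (hP.finite_extremePoints.isClosed_convexHull (𝕜 := ℝ)).closure_eq,
    closure_convexHull_extremePoints hPc hP.convex]

end NormedPolyhedron

theorem sum_abs_le_iff {ι : Type*} [Fintype ι] [DecidableEq ι] (a : ι → ℝ) (t : ℝ) :
    ∑ i, |a i| ≤ t ↔ ∀ s : Finset ι, ∑ i, (if i ∈ s then 1 else -1) * a i ≤ t := by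
  refine ⟨fun h s => le_trans (Finset.sum_le_sum fun i _ => ?_) h, fun h => ?_⟩
  · split_ifs
    · simpa using le_abs_self (a i)
    · simpa using neg_le_abs (a i)
  · convert h (Finset.univ.filter fun i => 0 ≤ a i) using 2 with i
    by_cases hi : 0 ≤ a i
    · simp [hi, abs_of_nonneg]
    · simp [hi, abs_of_neg (not_le.1 hi)]

section SumAbsAffine

variable {W : Type*} [AddCommGroup W] [Module ℝ W]

def IsSumAbsAffine (f : W → ℝ) : Prop :=
  ∃ (n : ℕ) (φ : Fin n → W →ᵃ[ℝ] ℝ), ∀ x, f x = ∑ i, |φ i x|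

theorem isSumAbsAffine_sum_abs {ι : Type*} [Fintype ι] (φ : ι → W →ᵃ[ℝ] ℝ) :
    IsSumAbsAffine fun x => ∑ i, |φ i x| :=
  ⟨Fintype.card ι, fun i => φ ((Fintype.equivFin ι).symm i), fun x =>
    Fintype.sum_equiv (Fintype.equivFin ι) _ _ fun i => by simp⟩

theorem IsSumAbsAffine.add {f g : W → ℝ} (hf : IsSumAbsAffine f) (hg : IsSumAbsAffine g) :
    IsSumAbsAffine fun x => f x + g x := by
  obtain ⟨m, φ, hφ⟩ := hf
  obtain ⟨n, ψ, hψ⟩ := hg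
  exact ⟨m + n, Fin.append φ ψ, fun x => by simp [Fin.sum_univ_add, hφ, hψ]⟩

theorem IsSumAbsAffine.const_mul {f : W → ℝ} (hf : IsSumAbsAffine f) {c : ℝ} (hc : 0 ≤ c) :
    IsSumAbsAffine fun x => c * f x := by
  obtain ⟨n, φ, hφ⟩ := hf
  exact ⟨n, fun i => c • φ i, fun x => by simp [hφ, Finset.mul_sum, abs_mul, abs_of_nonneg hc]⟩

theorem IsSumAbsAffine.nonneg {f : W → ℝ} (hf : IsSumAbsAffine f) (x : W) : 0 ≤ f x := by
  obtain ⟨n, φ, hφ⟩ := hf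
  exact hφ x ▸ Finset.sum_nonneg fun i _ => abs_nonneg _

/-- `∑ |φᵢ x| ≤ t` is the conjunction of the `2ⁿ` affine inequalities `∑ ±φᵢ x ≤ t`. -/
theorem IsSumAbsAffine.isPolyhedral_epigraph {f : W → ℝ} (hf : IsSumAbsAffine f) :
    IsPolyhedral {p : W × ℝ | f p.1 ≤ p.2} := by
  classical
  obtain ⟨n, φ, hφ⟩ := hf
  let σ (s : Finset (Fin n)) (i : Fin n) : ℝ := if i ∈ s then 1 else -1
  refine ⟨Finset.univ.image fun s =>
    (∑ i, σ s i • ((φ i).linear ∘ₗ LinearMap.fst ℝ W ℝ) - LinearMap.snd ℝ W ℝ,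
      -∑ i, σ s i * φ i 0), ?_⟩
  ext ⟨x, t⟩
  have hdecomp : ∀ i, φ i x = (φ i).linear x + φ i 0 := fun i => by
    simpa using congrFun (φ i).decomp x
  simp only [mem_ofPred_eq, hφ, sum_abs_le_iff, Finset.forall_mem_image, Finset.mem_univ,
    forall_const, hdecomp, mul_add, Finset.sum_add_distrib]
  refine forall_congr' fun s => ?_
  simp only [LinearMap.sub_apply, LinearMap.coe_sum, Finset.sum_apply, LinearMap.smul_apply,
    LinearMap.comp_apply, LinearMap.fst_apply, LinearMap.snd_apply, smul_eq_mul, σ]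
  constructor <;> intro h <;> linarith

theorem isSumAbsAffine_dTV {Z : Type*} [Fintype Z] (A B : W →ᵃ[ℝ] (Z → ℝ)) :
    IsSumAbsAffine fun x => dTV (A x) (B x) := by
  convert isSumAbsAffine_sum_abs fun z => (1 / 2 : ℝ) • (AffineMap.proj z).comp (A - B)
    using 2 with x
  simp [dTV, Finset.mul_sum, abs_mul]

end SumAbsAffine

theorem IsSumAbsAffine.continuous {W : Type*} [NormedAddCommGroup W] [NormedSpace ℝ W]
    [FiniteDimensional ℝ W] {f : W → ℝ} (hf : IsSumAbsAffine f) : Continuous f := by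
  obtain ⟨n, φ, hφ⟩ := hf
  rw [show f = fun x => ∑ i, |φ i x| from funext hφ]
  exact continuous_finsetSum _ fun i _ => (φ i).continuous_of_finiteDimensional.abs

section ConstrainedMinimization

variable {W : Type*}

def feasibleSet (M : Set W) (g : W → ℝ) (ρ : ℝ) : Set W := {x ∈ M | g x ≤ ρ}

def minimizerSet (M : Set W) (f g : W → ℝ) (ρ : ℝ) : Set W :=
  {x ∈ feasibleSet M g ρ | ∀ y ∈ feasibleSet M g ρ, f x ≤ f y}

def truncatedEpigraph (M : Set W) (f g : W → ℝ) (R T : ℝ) : Set (W × ℝ × ℝ) :=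
  {p | p.1 ∈ M ∧ g p.1 ≤ p.2.1 ∧ p.2.1 ≤ R ∧ f p.1 ≤ p.2.2 ∧ p.2.2 ≤ T}

theorem isPolyhedral_truncatedEpigraph [AddCommGroup W] [Module ℝ W] {M : Set W} {f g : W → ℝ}
    (hM : IsPolyhedral M) (hf : IsPolyhedral {p : W × ℝ | f p.1 ≤ p.2})
    (hg : IsPolyhedral {p : W × ℝ | g p.1 ≤ p.2}) (R T : ℝ) :
    IsPolyhedral (truncatedEpigraph M f g R T) := by
  let x : W × ℝ × ℝ →ₗ[ℝ] W := LinearMap.fst ℝ W (ℝ × ℝ)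
  let r : W × ℝ × ℝ →ₗ[ℝ] ℝ := LinearMap.fst ℝ ℝ ℝ ∘ₗ LinearMap.snd ℝ W (ℝ × ℝ)
  let t : W × ℝ × ℝ →ₗ[ℝ] ℝ := LinearMap.snd ℝ ℝ ℝ ∘ₗ LinearMap.snd ℝ W (ℝ × ℝ)
  have : truncatedEpigraph M f g R T = x ⁻¹' M ∩ ((x.prod r) ⁻¹' {p | g p.1 ≤ p.2} ∩
      ({p | r p ≤ R} ∩ ((x.prod t) ⁻¹' {p | f p.1 ≤ p.2} ∩ {p | t p ≤ T}))) := rfl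
  rw [this]
  exact (hM.preimage x).inter ((hg.preimage _).inter ((isPolyhedral_setOf_le r R).inter
    ((hf.preimage _).inter (isPolyhedral_setOf_le t T))))

section Topological

variable [TopologicalSpace W] {M : Set W} {f g : W → ℝ}

theorem isCompact_truncatedEpigraph [T2Space W] (hMc : IsCompact M) (hf : Continuous f)
    (hg : Continuous g) (R T : ℝ) : IsCompact (truncatedEpigraph M f g R T) := by
  obtain ⟨a, ha⟩ := hMc.bddBelow_image hf.continuousOn
  obtain ⟨b, hb⟩ := hMc.bddBelow_image hg.continuousOn
  have hclosed : IsClosed (truncatedEpigraph M f g R T) := by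
    show IsClosed (Prod.fst ⁻¹' M ∩ ({p : W × ℝ × ℝ | g p.1 ≤ p.2.1} ∩ ({p | p.2.1 ≤ R} ∩
      ({p | f p.1 ≤ p.2.2} ∩ {p | p.2.2 ≤ T}))))
    exact (hMc.isClosed.preimage continuous_fst).inter <|
      (isClosed_le (by fun_prop) (by fun_prop)).inter <|
      (isClosed_le (by fun_prop) (by fun_prop)).inter <|
      (isClosed_le (by fun_prop) (by fun_prop)).inter (isClosed_le (by fun_prop) (by fun_prop))
  refine (hMc.prod ((isCompact_Icc (a := b) (b := R)).prod
    (isCompact_Icc (a := a) (b := T)))).of_isClosed_subset hclosed ?_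
  rintro ⟨x, r, t⟩ ⟨hx, hgr, hr, hft, ht⟩
  exact ⟨hx, ⟨(hb ⟨x, hx, rfl⟩).trans hgr, hr⟩, (ha ⟨x, hx, rfl⟩).trans hft, ht⟩

theorem minimizerSet_nonempty (hMc : IsCompact M) (hf : Continuous f) (hg : Continuous g)
    {ρ : ℝ} (h : (feasibleSet M g ρ).Nonempty) : (minimizerSet M f g ρ).Nonempty := by
  obtain ⟨x, hx, hmin⟩ := (hMc.inter_right (isClosed_le hg continuous_const)).exists_isMinOn h
    hf.continuousOn
  exact ⟨x, hx, fun y hy => hmin hy⟩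

end Topological

section Metric

variable [PseudoMetricSpace W] {M : Set W} {f g : W → ℝ}

theorem exists_forall_minimizerSet_dist_lt (hMc : IsCompact M) (hf : Continuous f)
    (hg : Continuous g) {x₀ : W} (hx₀ : x₀ ∈ minimizerSet M f g 0) {ε : ℝ} (hε : 0 < ε) :
    ∃ δ > 0, ∀ ρ ∈ Icc 0 δ, ∀ x ∈ minimizerSet M f g ρ,
      ∃ y ∈ minimizerSet M f g 0, dist x y < ε := by
  set S₀ := minimizerSet M f g 0
  let K : Ioi (0 : ℝ) → Set W := fun δ => {x | g x ≤ δ ∧ f x ≤ f x₀ ∧ ε ≤ infDist x S₀}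
  have hK : ∀ δ, IsClosed (K δ) := fun δ =>
    (isClosed_le hg continuous_const).inter ((isClosed_le hf continuous_const).inter
      (isClosed_le continuous_const (continuous_infDist_pt _)))
  have hKmono : Monotone K := fun δ₁ δ₂ h x hx => ⟨hx.1.trans h, hx.2⟩
  have hempty : M ∩ ⋂ δ, K δ = ∅ := by
    refine eq_empty_of_forall_notMem fun x ⟨hxM, hx⟩ => ?_
    rw [mem_iInter] at hx
    have hgx : g x ≤ 0 := le_of_forall_pos_le_add fun δ hδ => by simpa using (hx ⟨δ, hδ⟩).1
    obtain ⟨-, hfx, hdist⟩ := hx ⟨1, mem_Ioi.2 one_pos⟩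
    have hxS : x ∈ S₀ := ⟨⟨hxM, hgx⟩, fun y hy => hfx.trans (hx₀.2 y hy)⟩
    have := hdist
    rw [infDist_zero_of_mem hxS] at this
    linarith
  obtain ⟨⟨δ, hδ⟩, hMδ⟩ := hMc.elim_directed_family_closed K hK hempty hKmono.directed_ge
  refine ⟨δ, hδ, fun ρ hρ x hx => (infDist_lt_iff ⟨x₀, hx₀⟩).1 ?_⟩
  by_contra! h
  have : x ∈ M ∩ K ⟨δ, hδ⟩ :=
    ⟨hx.1.1, hx.1.2.trans hρ.2, hx.2 x₀ ⟨hx₀.1.1, hx₀.1.2.trans hρ.1⟩, h⟩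
  simp [hMδ] at this

end Metric

end ConstrainedMinimization

section Normed

variable {W : Type*} [NormedAddCommGroup W] [NormedSpace ℝ W] {M : Set W} {f g : W → ℝ}

theorem lineMap_mem_minimizerSet (hM : Convex ℝ M) (hf : ConvexOn ℝ M f) (hg : ConvexOn ℝ M g)
    {a B ρ ρ₂ : ℝ} {y y₂ : W} (hy : y ∈ feasibleSet M g 0) (hya : f y ≤ a)
    (hy₂ : y₂ ∈ feasibleSet M g ρ₂) (hy₂a : f y₂ ≤ a + B * ρ₂)
    (hlow : ∀ x ∈ feasibleSet M g ρ, a + B * ρ ≤ f x) (hρ : 0 ≤ ρ) (hρρ₂ : ρ ≤ ρ₂)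
    (hρ₂ : 0 < ρ₂) : AffineMap.lineMap y y₂ (ρ / ρ₂) ∈ minimizerSet M f g ρ := by
  set t := ρ / ρ₂
  have ht₀ : 0 ≤ t := div_nonneg hρ hρ₂.le
  have ht₁ : 0 ≤ 1 - t := sub_nonneg.2 (div_le_one_of_le₀ hρρ₂ hρ₂.le)
  have htρ : t * ρ₂ = ρ := div_mul_cancel₀ ρ hρ₂.ne'
  rw [AffineMap.lineMap_apply_module]
  refine ⟨⟨hM hy.1 hy₂.1 ht₁ ht₀ (by ring), ?_⟩, fun x hx => ?_⟩
  · calc g ((1 - t) • y + t • y₂) ≤ (1 - t) • g y + t • g y₂ :=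
          hg.2 hy.1 hy₂.1 ht₁ ht₀ (by ring)
      _ ≤ (1 - t) * 0 + t * ρ₂ := by
          simp only [smul_eq_mul]
          gcongr
          exacts [hy.2, hy₂.2]
      _ = ρ := by rw [← htρ]; ring
  · calc f ((1 - t) • y + t • y₂) ≤ (1 - t) • f y + t • f y₂ :=
          hf.2 hy.1 hy₂.1 ht₁ ht₀ (by ring)
      _ ≤ (1 - t) * a + t * (a + B * ρ₂) := by
          simp only [smul_eq_mul]
          gcongr
      _ = a + B * ρ := by rw [← htρ]; ring
      _ ≤ f x := hlow x hx

theorem exists_affine_lower_bound_attained (hM : IsPolyhedral M) (hMc : IsCompact M)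
    (hf : Continuous f) (hfP : IsPolyhedral {p : W × ℝ | f p.1 ≤ p.2}) (hg : Continuous g)
    (hgP : IsPolyhedral {p : W × ℝ | g p.1 ≤ p.2}) (hg₀ : ∀ x ∈ M, 0 ≤ g x) {x₀ : W}
    (hx₀ : x₀ ∈ minimizerSet M f g 0) :
    ∃ ρ₂ > 0, ∃ B : ℝ, (∃ y ∈ feasibleSet M g ρ₂, f y ≤ f x₀ + B * ρ₂) ∧
      ∀ ρ ≤ ρ₂, ∀ x ∈ feasibleSet M g ρ, f x₀ + B * ρ ≤ f x := by
  obtain ⟨T, hT⟩ := hMc.bddAbove_image hf.continuousOn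
  obtain ⟨E, hE⟩ := (isPolyhedral_truncatedEpigraph hM hfP hgP 1 T).exists_finset_eq_convexHull
    (isCompact_truncatedEpigraph hMc hf hg 1 T)
  have hEP : ∀ e ∈ E, e ∈ truncatedEpigraph M f g 1 T := fun e he =>
    hE ▸ subset_convexHull ℝ _ he
  have hxP : ∀ x ∈ M, ∀ ρ, g x ≤ ρ → ρ ≤ 1 → (x, ρ, f x) ∈ truncatedEpigraph M f g 1 T :=
    fun x hx ρ h₁ h₂ => ⟨hx, h₁, h₂, le_rfl, hT ⟨x, hx, rfl⟩⟩
  let r : W × ℝ × ℝ →ₗ[ℝ] ℝ := LinearMap.fst ℝ ℝ ℝ ∘ₗ LinearMap.snd ℝ W (ℝ × ℝ)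
  let t : W × ℝ × ℝ →ₗ[ℝ] ℝ := LinearMap.snd ℝ ℝ ℝ ∘ₗ LinearMap.snd ℝ W (ℝ × ℝ)
  have hr : ∀ e ∈ E, 0 ≤ r e := fun e he => (hg₀ _ (hEP e he).1).trans (hEP e he).2.1
  have hpos : ∃ e ∈ E, 0 < r e := by
    by_contra! h
    have := convexHull_min h (convex_halfSpace_le r.isLinear 0)
      (hE ▸ hxP x₀ hx₀.1.1 1 (hx₀.1.2.trans zero_le_one) le_rfl)
    exact one_pos.not_ge (show (1 : ℝ) ≤ 0 from this)
  have ha : ∀ e ∈ E, r e = 0 → f x₀ ≤ t e := fun e he h =>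
    (hx₀.2 e.1 ⟨(hEP e he).1, h ▸ (hEP e he).2.1⟩).trans (hEP e he).2.2.2.1
  obtain ⟨B, e, he, hre, hte, hB⟩ := exists_min_slope_minorant E r t (f x₀) hr hpos ha
  exact ⟨r e, hre, B, ⟨e.1, ⟨(hEP e he).1, (hEP e he).2.1⟩, hte ▸ (hEP e he).2.2.2.1⟩,
    fun ρ hρ x hx => hB _ (hE ▸ hxP x hx.1 ρ hx.2 (hρ.trans (hEP e he).2.2.1))⟩

theorem tendsto_hausdorffDist_minimizerSet (hM : IsPolyhedral M) (hMc : IsCompact M)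
    (hf : Continuous f) (hfP : IsPolyhedral {p : W × ℝ | f p.1 ≤ p.2}) (hg : Continuous g)
    (hgP : IsPolyhedral {p : W × ℝ | g p.1 ≤ p.2}) (hg₀ : ∀ x ∈ M, 0 ≤ g x)
    (hfeas : (feasibleSet M g 0).Nonempty) :
    Tendsto (fun ρ => hausdorffDist (minimizerSet M f g ρ) (minimizerSet M f g 0))
      (𝓝[>] 0) (𝓝 0) := by
  obtain ⟨x₀, hx₀⟩ := minimizerSet_nonempty hMc hf hg hfeas
  obtain ⟨ρ₂, hρ₂, B, ⟨y₂, hy₂, hfy₂⟩, hlow⟩ :=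
    exists_affine_lower_bound_attained hM hMc hf hfP hg hgP hg₀ hx₀
  have hconv : ∀ {h : W → ℝ}, IsPolyhedral {p : W × ℝ | h p.1 ≤ p.2} → ConvexOn ℝ M h :=
    fun hh => (convexOn_univ_of_isPolyhedral_epigraph hh).subset (subset_univ M) hM.convex
  have hnear : ∀ ρ ∈ Ioc 0 ρ₂, ∀ y ∈ minimizerSet M f g 0,
      ∃ z ∈ minimizerSet M f g ρ, dist y z ≤ ρ / ρ₂ * diam M := fun ρ hρ y hy =>
    ⟨_, lineMap_mem_minimizerSet hM.convex (hconv hfP) (hconv hgP) hy.1 (hy.2 x₀ hx₀.1) hy₂ hfy₂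
      (hlow ρ hρ.2) hρ.1.le hρ.2 hρ₂, by
        rw [dist_left_lineMap, Real.norm_of_nonneg (div_nonneg hρ.1.le hρ₂.le)]
        exact mul_le_mul_of_nonneg_left (dist_le_diam_of_mem hMc.isBounded hy.1.1 hy₂.1)
          (div_nonneg hρ.1.le hρ₂.le)⟩
  refine tendsto_order.2 ⟨fun b hb => Eventually.of_forall fun ρ =>
    hb.trans_le hausdorffDist_nonneg, fun ε hε => ?_⟩
  obtain ⟨δ, hδ, hfar⟩ := exists_forall_minimizerSet_dist_lt hMc hf hg hx₀ (half_pos hε)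
  have hsmall : ∀ᶠ ρ in 𝓝[>] 0, ρ / ρ₂ * diam M < ε / 2 :=
    (((continuous_id.div_const ρ₂).mul_const (diam M)).tendsto' 0 0 (by simp)).mono_left
      nhdsWithin_le_nhds |>.eventually (gt_mem_nhds (half_pos hε))
  filter_upwards [Ioo_mem_nhdsGT (lt_min hδ hρ₂), hsmall] with ρ hρ hρε
  refine (hausdorffDist_le_of_mem_dist (half_pos hε).le (fun x hx => ?_) fun y hy => ?_).trans_lt
    (half_lt_self hε)
  · obtain ⟨y, hy, hxy⟩ := hfar ρ ⟨hρ.1.le, hρ.2.le.trans (min_le_left _ _)⟩ x hx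
    exact ⟨y, hy, hxy.le⟩
  · obtain ⟨z, hz, hyz⟩ := hnear ρ ⟨hρ.1, hρ.2.le.trans (min_le_right _ _)⟩ y hy
    exact ⟨z, hz, hyz.trans hρε.le⟩

end Normed

section MarkovKernels

variable {X Y : Type*} [Fintype X] [Fintype Y]

noncomputable def repairJointLinear (P : X × Y → ℝ) : (X → X → ℝ) →ₗ[ℝ] X × Y → ℝ where
  toFun K := repairJoint K P
  map_add' K K' := by ext; simp [repairJoint, add_mul, Finset.sum_add_distrib]
  map_smul' c K := by ext; simp [repairJoint, Finset.mul_sum, mul_assoc]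

noncomputable def pushforwardLinear (q : X → ℝ) : (X → X → ℝ) →ₗ[ℝ] X → ℝ where
  toFun K := pushforward K q
  map_add' K K' := by ext; simp [pushforward, add_mul, Finset.sum_add_distrib]
  map_smul' c K := by ext; simp [pushforward, Finset.mul_sum, mul_assoc]

theorem isPolyhedral_setOf_isMarkovKernel : IsPolyhedral {K : X → X → ℝ | IsMarkovKernel K} := by
  let entry (x' x : X) : (X → X → ℝ) →ₗ[ℝ] ℝ := LinearMap.proj x ∘ₗ LinearMap.proj x'
  have : {K : X → X → ℝ | IsMarkovKernel K} =
      ⋂ x, (⋂ x', {K | (-entry x' x) K ≤ 0}) ∩ {K | (∑ x', entry x' x) K = 1} := by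
    ext K
    simp [IsMarkovKernel, IsProbDist, entry]
  rw [this]
  exact IsPolyhedral.iInter fun x =>
    (IsPolyhedral.iInter fun x' => isPolyhedral_setOf_le _ _).inter (isPolyhedral_setOf_eq _ _)

theorem isCompact_setOf_isMarkovKernel : IsCompact {K : X → X → ℝ | IsMarkovKernel K} := by
  refine (isCompact_univ_pi fun _ => isCompact_univ_pi fun _ =>
    isCompact_Icc (a := 0) (b := 1)).of_isClosed_subset
    isPolyhedral_setOf_isMarkovKernel.isClosed fun K hK => ?_
  simp only [mem_univ_pi, mem_Icc]
  intro x' x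
  exact ⟨(hK x).1 x', (hK x).2 ▸ Finset.single_le_sum (fun i _ => (hK x).1 i) (Finset.mem_univ x')⟩

theorem exists_isMarkovKernel_pushforward_eq {q q' : X → ℝ} (h : ∑ x, q x = ∑ x, q' x) :
    ∃ K, IsMarkovKernel K ∧ pushforward K q = pushforward K q' := by
  refine ⟨fun _ _ => (Fintype.card X : ℝ)⁻¹, fun x => ⟨fun _ => by positivity, ?_⟩, ?_⟩
  · have : Nonempty X := ⟨x⟩
    simp
  · ext
    simp [pushforward, ← Finset.mul_sum, h]

end MarkovKernels

theorem solution_sets_hausdorff_tendsto_general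
    {X Y : Type*} [Fintype X] [Fintype Y]
    (π0 π1 : ℝ) (hπ0 : 0 ≤ π0) (hπ1 : 0 ≤ π1)
    (P0 P1 : X × Y → ℝ) (hP0 : IsProbDist P0) (hP1 : IsProbDist P1)
    (Q0 Q1 : X → ℝ)
    (hQ0 : Q0 = fun x => ∑ y : Y, P0 (x, y))
    (hQ1 : Q1 = fun x => ∑ y : Y, P1 (x, y))
    (Feas : ℝ → Set ((X → X → ℝ) × (X → X → ℝ)))
    (hFeas : ∀ ρ : ℝ, Feas ρ =
      {KK | IsMarkovKernel KK.1 ∧ IsMarkovKernel KK.2 ∧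
        dTV (pushforward KK.2 Q1) (pushforward KK.1 Q0) ≤ ρ})
    (obj : ((X → X → ℝ) × (X → X → ℝ)) → ℝ)
    (hobj : obj = fun KK =>
      π0 * dTV (repairJoint KK.1 P0) P0 + π1 * dTV (repairJoint KK.2 P1) P1)
    (S : ℝ → Set ((X → X → ℝ) × (X → X → ℝ)))
    (hS : ∀ ρ : ℝ, S ρ = {KK ∈ Feas ρ | ∀ KK' ∈ Feas ρ, obj KK ≤ obj KK'}) :
    Filter.Tendsto (fun ρ => Metric.hausdorffDist (S ρ) (S 0))
      (nhdsWithin 0 (Set.Ioi 0)) (nhds 0) := by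
  let fst := LinearMap.fst ℝ (X → X → ℝ) (X → X → ℝ)
  let snd := LinearMap.snd ℝ (X → X → ℝ) (X → X → ℝ)
  have h0 := isSumAbsAffine_dTV (repairJointLinear P0 ∘ₗ fst).toAffineMap (AffineMap.const ℝ _ P0)
  have h1 := isSumAbsAffine_dTV (repairJointLinear P1 ∘ₗ snd).toAffineMap (AffineMap.const ℝ _ P1)
  have hobjA : IsSumAbsAffine obj := by
    rw [hobj]
    exact (h0.const_mul hπ0).add (h1.const_mul hπ1)
  have hgapA := isSumAbsAffine_dTV (pushforwardLinear Q1 ∘ₗ snd).toAffineMap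
    (pushforwardLinear Q0 ∘ₗ fst).toAffineMap
  have hS' : S = minimizerSet ({K | IsMarkovKernel K} ×ˢ {K | IsMarkovKernel K}) obj
      (fun KK => dTV (pushforward KK.2 Q1) (pushforward KK.1 Q0)) := by
    ext ρ KK
    simp [hS, hFeas, minimizerSet, feasibleSet, and_assoc]
  have hQ : ∑ x, Q0 x = ∑ x, Q1 x := by
    simp only [hQ0, hQ1, ← Fintype.sum_prod_type', hP0.2, hP1.2]
  obtain ⟨K, hK, hKQ⟩ := exists_isMarkovKernel_pushforward_eq hQ
  rw [hS']
  exact tendsto_hausdorffDist_minimizerSet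
    (isPolyhedral_setOf_isMarkovKernel.prod isPolyhedral_setOf_isMarkovKernel)
    (isCompact_setOf_isMarkovKernel.prod isCompact_setOf_isMarkovKernel)
    hobjA.continuous hobjA.isPolyhedral_epigraph hgapA.continuous hgapA.isPolyhedral_epigraph
    (fun KK _ => hgapA.nonneg KK) ⟨(K, K), ⟨hK, hK⟩, by simp [hKQ, dTV]⟩

/-- Proposition 1: the set of optimal pre-processing kernel pairs
for fairness level `ρ` converges (in Hausdorff distance) to the set of optimal
kernel pairs under exact statistical parity as `ρ → 0⁺`. -/
theorem solution_sets_hausdorff_tendsto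
    {X Y : Type*} [Fintype X] [Fintype Y] [Nonempty X] [Nonempty Y]
    (π0 π1 : ℝ) (hπ0 : 0 ≤ π0) (hπ1 : 0 ≤ π1) (hπ : π0 + π1 = 1)
    (P0 P1 : X × Y → ℝ) (hP0 : IsProbDist P0) (hP1 : IsProbDist P1)
    (Q0 Q1 : X → ℝ)
    (hQ0 : Q0 = fun x => ∑ y : Y, P0 (x, y))
    (hQ1 : Q1 = fun x => ∑ y : Y, P1 (x, y))
    (Feas : ℝ → Set ((X → X → ℝ) × (X → X → ℝ)))
    (hFeas : ∀ ρ : ℝ, Feas ρ =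
      {KK | IsMarkovKernel KK.1 ∧ IsMarkovKernel KK.2 ∧
        dTV (pushforward KK.2 Q1) (pushforward KK.1 Q0) ≤ ρ})
    (obj : ((X → X → ℝ) × (X → X → ℝ)) → ℝ)
    (hobj : obj = fun KK =>
      π0 * dTV (repairJoint KK.1 P0) P0 + π1 * dTV (repairJoint KK.2 P1) P1)
    (S : ℝ → Set ((X → X → ℝ) × (X → X → ℝ)))
    (hS : ∀ ρ : ℝ, S ρ = {KK ∈ Feas ρ | ∀ KK' ∈ Feas ρ, obj KK ≤ obj KK'}) :
    Filter.Tendsto (fun ρ => Metric.hausdorffDist (S ρ) (S 0))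
      (nhdsWithin 0 (Set.Ioi 0)) (nhds 0) :=
  solution_sets_hausdorff_tendsto_general π0 π1 hπ0 hπ1 P0 P1 hP0 hP1 Q0 Q1 hQ0 hQ1 Feas hFeas obj
    hobj S hS
end
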